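/- arXiv:1103.3727 — 2 statements merged into one kernel-verified Lean document; each statement's English description precedes it below -/
import Mathlib

section
/- For all k ≥ 0 and ℓ > 0, the alternating sum ∑_{s=0}^{ℓ} (-1)^{ℓ-s} u^{binom(ℓ-s,2)} · [k+2s choose s]_u · [k+ℓ+s choose ℓ-s]_u · [k+2ℓ]/[k+ℓ+s] equals 0, where [m] is the u-integer and [a choose b]_u the Gaussian binomial coefficient. -/
open Finset

noncomputable section

/-- The field of rational functions in the variable `u`. -/
abbrev K : Type := RatFunc ℚ

/-- The variable `u`. -/
def u : K := RatFunc.X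

/-- The u-integer `[m] = 1 + u + ... + u^{m-1}`. -/
def qint (m : ℕ) : K := ∑ i ∈ range m, u ^ i

/-- The u-factorial `[m]! = [1][2]⋯[m]`. -/
def qfact (m : ℕ) : K := ∏ i ∈ range m, qint (i + 1)

/-- The Gaussian binomial coefficient `[a choose b]_u`, zero for `b > a`. -/
def qbinom (a b : ℕ) : K :=
  if b ≤ a then qfact a / (qfact b * qfact (a - b)) else 0

/-! With `j = ℓ - s`, trinomial revision followed by absorption turns the term of index `s` into
`[k+2ℓ]/[ℓ] · (-1)^j u^{binom(j,2)} [ℓ choose j] [k+2ℓ-1-j choose ℓ-1]`. So the sum is `[k+2ℓ]/[ℓ]`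
times the `ℓ`-th `u`-backward difference `∇_ℓ` of `m ↦ [m choose ℓ-1]` at `m = k+2ℓ-1`.
The `u`-Pascal rule gives `∇_{l+1} f(m) = ∇_l f(m) - u^l ∇_l f(m-1)`, from which `∇_l` sends
`[· choose n]` to `u^{l(m-n)} [m-l choose n-l]`; hence, as for ordinary differences of a polynomial
of degree `n`, `∇_{n+1}` annihilates `[· choose n]`. -/

lemma qint_ne_zero {m : ℕ} (hm : 0 < m) : qint m ≠ 0 := by
  have h : qint m = algebraMap (Polynomial ℚ) K (∑ i ∈ range m, Polynomial.X ^ i) := by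
    simp [qint, u]
  rw [h]
  refine RatFunc.algebraMap_ne_zero fun hp => ?_
  simpa [Polynomial.eval_finsetSum, hm.ne'] using congrArg (Polynomial.eval 1) hp

lemma qint_add (a b : ℕ) : qint (a + b) = qint a + u ^ a * qint b := by
  simp only [qint, sum_range_add, mul_sum, pow_add]

lemma qfact_ne_zero (m : ℕ) : qfact m ≠ 0 :=
  prod_ne_zero_iff.mpr fun i _ => qint_ne_zero i.add_one_pos

lemma qfact_succ (m : ℕ) : qfact (m + 1) = qfact m * qint (m + 1) :=
  prod_range_succ _ m

@[simp]
lemma qfact_zero : qfact 0 = 1 :=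
  prod_range_zero _

lemma qbinom_of_le {a b : ℕ} (h : b ≤ a) : qbinom a b = qfact a / (qfact b * qfact (a - b)) :=
  if_pos h

lemma qbinom_of_lt {a b : ℕ} (h : a < b) : qbinom a b = 0 :=
  if_neg (Nat.not_le.mpr h)

@[simp]
lemma qbinom_zero_right (a : ℕ) : qbinom a 0 = 1 := by
  simp [qbinom_of_le, qfact_ne_zero]

@[simp]
lemma qbinom_self (a : ℕ) : qbinom a a = 1 := by
  simp [qbinom_of_le, qfact_ne_zero]

lemma qbinom_add_succ (b c : ℕ) :
    qbinom (b + c + 1) (b + 1) = qbinom (b + c) (b + 1) + u ^ c * qbinom (b + c) b := by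
  rcases c with _ | c
  · simp [qbinom_of_lt]
  · rw [qbinom_of_le (by omega), qbinom_of_le (by omega), qbinom_of_le (by omega),
      show b + (c + 1) + 1 - (b + 1) = c + 1 by omega, show b + (c + 1) - (b + 1) = c by omega,
      Nat.add_sub_cancel_left, show b + (c + 1) + 1 = (b + c + 1) + 1 by ring,
      show b + (c + 1) = b + c + 1 by ring, qfact_succ (b + c + 1), qfact_succ b, qfact_succ c]
    have hsum : qint (b + c + 1 + 1) = qint (c + 1) + u ^ (c + 1) * qint (b + 1) := by
      rw [← qint_add]; ring_nf
    have := qfact_ne_zero b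
    have := qfact_ne_zero c
    have := qint_ne_zero b.add_one_pos
    have := qint_ne_zero c.add_one_pos
    field_simp
    linear_combination qfact (b + c + 1) * hsum

lemma qbinom_succ_succ (a b : ℕ) :
    qbinom (a + 1) (b + 1) = qbinom a (b + 1) + u ^ (a - b) * qbinom a b := by
  rcases le_or_gt b a with h | h
  · obtain ⟨c, rfl⟩ := Nat.exists_eq_add_of_le h
    simpa using qbinom_add_succ b c
  · rw [qbinom_of_lt (by omega), qbinom_of_lt (by omega), qbinom_of_lt h, mul_zero, add_zero]

lemma qbinom_mul_qbinom_add (b c t : ℕ) :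
    qbinom (b + c) b * qbinom (b + c + t) t = qbinom (b + t) t * qbinom (b + c + t) (b + t) := by
  rw [qbinom_of_le (by omega), qbinom_of_le (by omega), qbinom_of_le (by omega),
    qbinom_of_le (by omega), Nat.add_sub_cancel_left, Nat.add_sub_cancel, Nat.add_sub_cancel,
    show b + c + t - (b + t) = c by omega]
  have := qfact_ne_zero b
  have := qfact_ne_zero c
  have := qfact_ne_zero t
  have := qfact_ne_zero (b + c)
  have := qfact_ne_zero (b + t)
  field_simp

lemma qint_mul_qbinom_succ_succ (n m : ℕ) :
    qint (m + 1) * qbinom (n + 1) (m + 1) = qint (n + 1) * qbinom n m := by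
  rcases le_or_gt m n with h | h
  · rw [qbinom_of_le h, qbinom_of_le (by omega), Nat.add_sub_add_right, qfact_succ, qfact_succ]
    have := qfact_ne_zero m
    have := qfact_ne_zero (n - m)
    have := qint_ne_zero m.add_one_pos
    field_simp
  · simp [qbinom_of_lt, h]

/-- `∇_l = ∏_{i<l} (1 - u^i S)` with `S f (m) = f (m - 1)`, expanded by the `u`-binomial
theorem. -/
def qBwdDiff (l : ℕ) (f : ℕ → K) (m : ℕ) : K :=
  ∑ j ∈ range (l + 1), (-1) ^ j * u ^ j.choose 2 * qbinom l j * f (m - j)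

lemma qBwdDiff_succ (l : ℕ) (f : ℕ → K) (m : ℕ) :
    qBwdDiff (l + 1) f m = qBwdDiff l f m - u ^ l * qBwdDiff l f (m - 1) := by
  have hpascal : ∀ i ∈ range (l + 1),
      (-1 : K) ^ (i + 1) * u ^ (i + 1).choose 2 * qbinom (l + 1) (i + 1) =
        (-1) ^ (i + 1) * u ^ (i + 1).choose 2 * qbinom l (i + 1) -
          u ^ l * ((-1) ^ i * u ^ i.choose 2 * qbinom l i) := by
    intro i hi
    have hexp : u ^ (i + 1).choose 2 * u ^ (l - i) = u ^ i.choose 2 * u ^ l := by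
      have hchoose : (i + 1).choose 2 = i + i.choose 2 := by
        rw [Nat.choose_succ_succ', Nat.choose_one_right]
      rw [← pow_add, ← pow_add, hchoose]
      have := mem_range.1 hi
      congr 1
      omega
    rw [qbinom_succ_succ]
    linear_combination (-(-1) ^ i * qbinom l i) * hexp
  have hextend : qBwdDiff l f m =
      ∑ j ∈ range (l + 2), (-1) ^ j * u ^ j.choose 2 * qbinom l j * f (m - j) := by
    rw [sum_range_succ, qbinom_of_lt l.lt_succ_self, mul_zero, zero_mul, add_zero, qBwdDiff]
  rw [hextend, qBwdDiff, qBwdDiff, sum_range_succ', sum_range_succ' _ (l + 1), mul_sum,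
    ← sub_add_eq_add_sub, ← sum_sub_distrib]
  congr 1
  · refine sum_congr rfl fun i hi => ?_
    rw [hpascal i hi, Nat.sub_sub, add_comm 1 i]
    ring
  · simp

lemma qBwdDiff_qbinom (l p q : ℕ) :
    qBwdDiff l (qbinom · (l + p)) (2 * l + p + q) = u ^ (l * (l + q)) * qbinom (l + p + q) p := by
  induction l generalizing p q with
  | zero => simp [qBwdDiff]
  | succ l ih =>
    rw [qBwdDiff_succ, show l + 1 + p = l + (p + 1) by ring,
      show 2 * (l + 1) + p + q = 2 * l + (p + 1) + (q + 1) by ring,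
      show 2 * l + (p + 1) + (q + 1) - 1 = 2 * l + (p + 1) + q by omega, ih, ih,
      show l + (p + 1) + (q + 1) = p + (l + q + 1) + 1 by ring,
      show l + (p + 1) + q = p + (l + q + 1) by ring, qbinom_add_succ]
    ring_nf

lemma qBwdDiff_qbinom_eq_zero (n q : ℕ) : qBwdDiff (n + 1) (qbinom · n) (2 * n + 1 + q) = 0 := by
  have h₁ := qBwdDiff_qbinom n 0 (q + 1)
  have h₀ := qBwdDiff_qbinom n 0 q
  simp only [add_zero, qbinom_zero_right, mul_one] at h₁ h₀
  rw [qBwdDiff_succ, show 2 * n + 1 + q - 1 = 2 * n + q by omega,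
    show 2 * n + 1 + q = 2 * n + (q + 1) by ring, h₁, h₀]
  ring

lemma qbinom_mul_qbinom_div_qint {k n s j : ℕ} (h : s + j = n + 1) :
    qbinom (k + 2 * s) s * qbinom (k + n + s + 1) j / qint (k + n + s + 1) =
      qbinom (n + 1) j * qbinom (k + n + s) n / qint (n + 1) := by
  have hrev := qbinom_mul_qbinom_add s (k + s) j
  rw [show s + (k + s) + j = k + n + s + 1 by omega, show s + (k + s) = k + 2 * s by ring, h]
    at hrev
  have habs := qint_mul_qbinom_succ_succ (k + n + s) n
  have := qint_ne_zero (Nat.add_one_pos n)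
  have := qint_ne_zero (Nat.add_one_pos (k + n + s))
  rw [hrev, div_eq_div_iff (by assumption) (by assumption)]
  linear_combination qbinom (n + 1) j * habs

/-- For `k ≥ 0` and `ℓ > 0`, the alternating sum
`∑_{s=0}^{ℓ} (-1)^{ℓ-s} u^{binom(ℓ-s,2)} [k+2s choose s]_u [k+ℓ+s choose ℓ-s]_u [k+2ℓ]/[k+ℓ+s]`
vanishes; this expresses that the matrix `A_{k,k+2ℓ} = [k+2ℓ choose ℓ]_u` has the inverse
`B_{k,k+2ℓ} = (-1)^ℓ u^{binom(ℓ,2)} ([k+2ℓ]/[k+ℓ]) [k+ℓ choose ℓ]_u`. -/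
theorem alternating_sum_zero (k ℓ : ℕ) (hℓ : 0 < ℓ) :
    ∑ s ∈ range (ℓ + 1),
      (-1 : K) ^ (ℓ - s) * u ^ ((ℓ - s).choose 2) * qbinom (k + 2 * s) s *
        qbinom (k + ℓ + s) (ℓ - s) * (qint (k + 2 * ℓ) / qint (k + ℓ + s)) = 0 := by
  obtain ⟨n, rfl⟩ := Nat.exists_eq_add_one_of_ne_zero hℓ.ne'
  set c : ℕ → K := fun j => (-1) ^ j * u ^ j.choose 2
  set Q := qint (k + 2 * (n + 1))
  calc _ = ∑ p ∈ antidiagonal (n + 1), c p.2 * qbinom (k + 2 * p.1) p.1 *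
          qbinom (k + (n + 1) + p.1) p.2 * (Q / qint (k + (n + 1) + p.1)) :=
        (Nat.sum_antidiagonal_eq_sum_range_succ (fun s j => c j * qbinom (k + 2 * s) s *
          qbinom (k + (n + 1) + s) j * (Q / qint (k + (n + 1) + s))) _).symm
    _ = Q / qint (n + 1) * ∑ p ∈ antidiagonal (n + 1),
          c p.2 * qbinom (n + 1) p.2 * qbinom (2 * n + 1 + k - p.2) n := by
        rw [mul_sum]
        refine sum_congr rfl fun ⟨s, j⟩ hp => ?_
        have hsj : s + j = n + 1 := mem_antidiagonal.1 hp
        rw [show k + (n + 1) + s = k + n + s + 1 by ring,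
          show 2 * n + 1 + k - j = k + n + s by omega]
        linear_combination c j * Q * qbinom_mul_qbinom_div_qint hsj
    _ = Q / qint (n + 1) * qBwdDiff (n + 1) (qbinom · n) (2 * n + 1 + k) := by
        rw [qBwdDiff, ← Nat.sum_antidiagonal_eq_sum_range_succ
          (fun j _ => c j * qbinom (n + 1) j * qbinom (2 * n + 1 + k - j) n),
          ← Nat.sum_antidiagonal_swap]
        rfl
    _ = 0 := by rw [qBwdDiff_qbinom_eq_zero, mul_zero]

end
end

section
/- Setting g^r_n(q,y) := (1/n)·∑_{p ≥ n-r, ℓ ≥ r} (p+ℓ)·binom(n+ℓ-r-1, n-1)·binom(p+r-1, n-1)·y^{p-ℓ}·q^{pℓ} as a formal series, one has the duality g^r_n(q,y) = g^{n-r}_n(q, y^{-1}) for all 0 ≤ r ≤ n. -/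
open Finset

/-- Coefficient of `y^a q^m` in the higher stable pair series
`g^r_n(q,y) = (1/n)·∑_{p≥n-r, ℓ≥r} (p+ℓ)·binom(n+ℓ-r-1,n-1)·binom(p+r-1,n-1)·y^{p-ℓ}q^{pℓ}`:
only the finitely many pairs `(p,ℓ)` with `p-ℓ = a`, `pℓ = m` contribute. -/
def gCoeff (n r : ℕ) (a : ℤ) (m : ℕ) : ℚ :=
  (1 / (n : ℚ)) *
    ∑ pl ∈ (range (m + a.natAbs + 2) ×ˢ range (m + a.natAbs + 2)).filter
        (fun pl => n - r ≤ pl.1 ∧ r ≤ pl.2 ∧ pl.1 * pl.2 = m ∧ (pl.1 : ℤ) - (pl.2 : ℤ) = a),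
      ((pl.1 : ℚ) + (pl.2 : ℚ)) * ((n + pl.2 - r - 1).choose (n - 1) : ℚ) *
        ((pl.1 + r - 1).choose (n - 1) : ℚ)

/-! Swapping `(p, ℓ) ↦ (ℓ, p)` sends `y^{p-ℓ}` to `y^{ℓ-p}`, fixes `q^{pℓ}` and `p + ℓ`, and under
`r ↦ n - r` exchanges the two binomial factors `binom(n+ℓ-r-1, n-1)` and `binom(p+r-1, n-1)`. -/

def gIndex (n r : ℕ) (a : ℤ) (m : ℕ) : Finset (ℕ × ℕ) :=
  (range (m + a.natAbs + 2) ×ˢ range (m + a.natAbs + 2)).filter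
    (fun pl => n - r ≤ pl.1 ∧ r ≤ pl.2 ∧ pl.1 * pl.2 = m ∧ (pl.1 : ℤ) - (pl.2 : ℤ) = a)

def gTerm (n r : ℕ) (pl : ℕ × ℕ) : ℚ :=
  ((pl.1 : ℚ) + (pl.2 : ℚ)) * ((n + pl.2 - r - 1).choose (n - 1) : ℚ) *
    ((pl.1 + r - 1).choose (n - 1) : ℚ)

theorem gCoeff_eq_sum_gIndex (n r : ℕ) (a : ℤ) (m : ℕ) :
    gCoeff n r a m = 1 / (n : ℚ) * ∑ pl ∈ gIndex n r a m, gTerm n r pl :=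
  rfl

variable {n r : ℕ}

theorem swap_mem_gIndex_iff (hr : r ≤ n) (a : ℤ) (m : ℕ) (pl : ℕ × ℕ) :
    pl.swap ∈ gIndex n (n - r) (-a) m ↔ pl ∈ gIndex n r a m := by
  obtain ⟨p, l⟩ := pl
  simp only [gIndex, Prod.swap, mem_filter, mem_product, mem_range, Int.natAbs_neg]
  constructor
  · rintro ⟨⟨hl, hp⟩, hl', hp', hm, ha⟩
    exact ⟨⟨hp, hl⟩, by omega, by omega, by rw [Nat.mul_comm, hm], by omega⟩
  · rintro ⟨⟨hp, hl⟩, hp', hl', hm, ha⟩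
    exact ⟨⟨hl, hp⟩, by omega, by omega, by rw [Nat.mul_comm, hm], by omega⟩

theorem gTerm_swap (hr : r ≤ n) (pl : ℕ × ℕ) : gTerm n (n - r) pl.swap = gTerm n r pl := by
  obtain ⟨p, l⟩ := pl
  have hp : n + p - (n - r) - 1 = p + r - 1 := by omega
  have hl : l + (n - r) - 1 = n + l - r - 1 := by omega
  simp only [gTerm, Prod.swap, hp, hl]
  ring

theorem g_duality_general (n r : ℕ) (hr : r ≤ n) (a : ℤ) (m : ℕ) :
    gCoeff n r a m = gCoeff n (n - r) (-a) m := by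
  rw [gCoeff_eq_sum_gIndex, gCoeff_eq_sum_gIndex]
  congr 1
  exact sum_equiv (Equiv.prodComm ℕ ℕ) (fun pl => (swap_mem_gIndex_iff hr a m pl).symm)
    (fun pl _ => (gTerm_swap hr pl).symm)

/-- The duality `g^r_n(q,y) = g^{n-r}_n(q,y⁻¹)` for `0 ≤ r ≤ n`, stated coefficientwise:
the coefficient of `y^a q^m` in `g^r_n` equals the coefficient of `y^{-a} q^m` in `g^{n-r}_n`. -/
theorem g_duality (n r : ℕ) (hn : 1 ≤ n) (hr : r ≤ n) (a : ℤ) (m : ℕ) :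
    gCoeff n r a m = gCoeff n (n - r) (-a) m :=
  g_duality_general n r hr a m
end
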